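/- arXiv:2409.16134 — 2 statements merged into one kernel-verified Lean document; each statement's English description precedes it below -/
import Mathlib

section
/- Let W : [-1,1] → [0,∞) satisfy (H1) and (H2). Then there exist constants C ≥ c > 0 (depending only on W) such that for all parameters Λ, κ, σ, b > 0 with Λ² ≥ C·max{bσ, bκ, (bσκ)^{1/2}, b^{1/2}κ}, the infimum of the energy F over the admissible class A satisfies −Λ²/(2κ) ≤ inf_A F ≤ −c·Λ²/κ. -/
open MeasureTheory Set Filter

noncomputable section

/-- The energy functional
`F(u,h) = ∫₀¹ ( W(u) + (b/2)|u'|² + (σ/2)|h'|² + (κ/2)|h''|² + Λ·u·h'' ) dx`,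
expressed in terms of the (weak) derivatives `u'`, `h'`, `h''`. -/
def energyF (W : ℝ → ℝ) (b σ κ Λ : ℝ) (u u' h' h'' : ℝ → ℝ) : ℝ :=
  ∫ x in Ioo (0:ℝ) 1,
    (W (u x) + b / 2 * u' x ^ 2 + σ / 2 * h' x ^ 2 + κ / 2 * h'' x ^ 2 + Λ * u x * h'' x)

/-- The admissible class `A`: `u` is (the restriction of) a `1`-periodic `W^{1,2}_loc`
function with values in `[-1,1]` and mean zero on `(0,1)`, with weak derivative `u'`;
`h` is a `1`-periodic `W^{2,2}_loc` function with mean zero, with weak derivatives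
`h'`, `h''`.  One-dimensional Sobolev regularity is encoded through absolute
continuity (the fundamental theorem of calculus) together with square-integrability
of the highest derivative on the periodicity cell. -/
structure IsAdmissible (u u' h h' h'' : ℝ → ℝ) : Prop where
  u_per : Function.Periodic u 1
  u'_per : Function.Periodic u' 1
  u_ftc : ∀ x : ℝ, u x = u 0 + ∫ t in (0:ℝ)..x, u' t
  u_mem : ∀ x : ℝ, u x ∈ Icc (-1:ℝ) 1
  u'_l2 : MemLp u' 2 (volume.restrict (Ioo (0:ℝ) 1))
  u_mean : (∫ x in Ioo (0:ℝ) 1, u x) = 0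
  h_per : Function.Periodic h 1
  h'_per : Function.Periodic h' 1
  h''_per : Function.Periodic h'' 1
  h_ftc : ∀ x : ℝ, h x = h 0 + ∫ t in (0:ℝ)..x, h' t
  h'_ftc : ∀ x : ℝ, h' x = h' 0 + ∫ t in (0:ℝ)..x, h'' t
  h''_l2 : MemLp h'' 2 (volume.restrict (Ioo (0:ℝ) 1))
  h_mean : (∫ x in Ioo (0:ℝ) 1, h x) = 0

/-- `max{bσ, bκ, (bσκ)^{1/2}, b^{1/2}κ}`. -/
def maxParam (b σ κ : ℝ) : ℝ :=
  max (max (b * σ) (b * κ)) (max (Real.sqrt (b * σ * κ)) (Real.sqrt b * κ))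

/-! The lower bound is pointwise: completing the square,
`κ/2 h''² + Λ u h'' ≥ -Λ² u²/(2κ) ≥ -Λ²/(2κ)` because `|u| ≤ 1`, and every other term of the
energy is nonnegative.

For the upper bound take `u(x) = clamp (K cos (2π n x))` and `h'' = -(Λ/κ) u`, so that the
coupling and bending terms together contribute `-Λ²/(2κ) ∫ u²`. Where `|u| < 1` one has
`|u'| ≥ π K n`, while the total variation of `u` is `4 n`; hence the transition layers have
measure at most `4/(πK)`, which controls both `∫ W(u)` and `∫ (1 - u²)`. The price is
`b/2 ∫ u'² ≤ 4π b K n²`, and `σ/2 ∫ h'² ≤ 2σΛ²/(κ² n²)` because the primitive of `u` is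
`O(1/n)`. With `M = max W`, the choices `K ≈ 1 + Mκ/Λ²` and `n² ≈ σ/κ` make every error term a
small multiple of `Λ²/κ` as soon as `Λ² ≫ max{bσ, bκ, (bσκ)^{1/2}, b^{1/2}κ}`. -/

open intervalIntegral Real Function

lemma intervalIntegrable_of_abs_le {g : ℝ → ℝ} {c : ℝ} (hg : Measurable g) (hb : ∀ y, |g y| ≤ c)
    (a b : ℝ) : IntervalIntegrable g volume a b :=
  (intervalIntegrable_const (c := c)).mono_fun' hg.aestronglyMeasurable (ae_of_all _ hb)

lemma intervalIntegral_sq_le_of_abs_le {g : ℝ → ℝ} {B : ℝ}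
    (hg : IntervalIntegrable (fun x => g x ^ 2) volume 0 1) (hB : ∀ x, |g x| ≤ B) :
    ∫ x in 0..1, g x ^ 2 ≤ B ^ 2 := by
  simpa using integral_mono_on zero_le_one hg intervalIntegrable_const fun x _ =>
    (sq_abs (g x)).symm.trans_le (pow_le_pow_left₀ (abs_nonneg _) (hB x) 2)

lemma Function.Antiperiodic.intervalIntegral_two_mul_eq_zero {f : ℝ → ℝ} {c : ℝ}
    (hf : Antiperiodic f c) (hint : ∀ a b, IntervalIntegrable f volume a b) :
    ∫ x in 0..2 * c, f x = 0 := by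
  have hshift : ∫ x in c..2 * c, f x = -∫ x in 0..c, f x := by
    rw [← intervalIntegral.integral_neg, ← funext hf, integral_comp_add_right]
    ring_nf
  rw [← integral_add_adjacent_intervals (hint 0 c) (hint c (2 * c)), hshift, add_neg_cancel]

lemma Function.Periodic.intervalIntegral_two_mul {f : ℝ → ℝ} {c : ℝ}
    (hf : Periodic f c) (hint : ∀ a b, IntervalIntegrable f volume a b) :
    ∫ x in 0..2 * c, f x = 2 * ∫ x in 0..c, f x := by
  simpa using hf.intervalIntegral_add_zsmul_eq 2 0 hint

lemma setIntegral_Ioo_zero_one (f : ℝ → ℝ) : ∫ x in Ioo (0 : ℝ) 1, f x = ∫ x in 0..1, f x := by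
  rw [intervalIntegral.integral_of_le zero_le_one, integral_Ioc_eq_integral_Ioo]

instance : IsProbabilityMeasure (volume.restrict (Ioo (0 : ℝ) 1)) :=
  ⟨by simp [Real.volume_Ioo]⟩

lemma le_integral_of_forall_le_of_nonpos {α : Type*} [MeasurableSpace α] {μ : Measure α}
    [IsProbabilityMeasure μ] {f : α → ℝ} {c : ℝ} (hc : c ≤ 0) (hf : ∀ x, c ≤ f x) :
    c ≤ ∫ x, f x ∂μ := by
  by_cases hint : Integrable f μ
  · simpa using integral_mono (integrable_const c) hint hf
  · rw [integral_undef hint]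
    exact hc

namespace Function.Periodic

variable {f : ℝ → ℝ}

lemma comp_nat_mul (hf : Periodic f 1) (n : ℕ) : Periodic (fun x => f (n * x)) 1 := fun x => by
  simpa [mul_add] using hf.nat_mul n (n * x)

lemma intervalIntegral_comp_nat_mul (hf : Periodic f 1)
    (hint : ∀ a b, IntervalIntegrable f volume a b) {n : ℕ} (hn : n ≠ 0) :
    ∫ x in 0..1, f (n * x) = ∫ x in 0..1, f x := by
  have hn' : (n : ℝ) ≠ 0 := Nat.cast_ne_zero.2 hn
  have := hf.intervalIntegral_add_zsmul_eq n 0 hint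
  simp only [zero_add, zsmul_eq_mul, Int.cast_natCast, mul_one] at this
  rw [intervalIntegral.integral_comp_mul_left f hn', mul_zero, mul_one, this, smul_eq_mul,
    inv_mul_cancel_left₀ hn']

variable {p : ℝ}

lemma periodic_primitive (hf : Periodic f p) (hint : ∀ a b, IntervalIntegrable f volume a b)
    (h0 : ∫ t in 0..p, f t = 0) : Periodic (fun x => ∫ t in 0..x, f t) p := fun x => by
  dsimp only
  rw [← integral_add_adjacent_intervals (hint 0 x) (hint x (x + p)),
    hf.intervalIntegral_add_eq x 0, zero_add, h0, add_zero]

lemma abs_primitive_le (hf : Periodic f p) (hp : 0 < p)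
    (hint : ∀ a b, IntervalIntegrable f volume a b) (h0 : ∫ t in 0..p, f t = 0) {c : ℝ}
    (hc : ∀ t, |f t| ≤ c) (x : ℝ) : |∫ t in 0..x, f t| ≤ c * p := by
  set y := x - ⌊x / p⌋ * p
  have hy0 : 0 ≤ y := Int.sub_floor_div_mul_nonneg x hp
  have hyp : y < p := Int.sub_floor_div_mul_lt x hp
  rw [← (hf.periodic_primitive hint h0).sub_int_mul_eq ⌊x / p⌋]
  calc |∫ t in 0..y, f t| ≤ ∫ t in 0..y, |f t| := abs_integral_le_integral_abs hy0
    _ ≤ ∫ _ in 0..y, c := integral_mono_on hy0 (hint 0 y).abs intervalIntegrable_const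
        fun t _ => hc t
    _ ≤ c * p := by
        rw [intervalIntegral.integral_const, smul_eq_mul, sub_zero, mul_comm]
        exact mul_le_mul_of_nonneg_left hyp.le ((abs_nonneg _).trans (hc 0))

end Function.Periodic

lemma exists_periodic_second_primitive {v : ℝ → ℝ} {B : ℝ} (hper : Periodic v 1)
    (hint : ∀ a b, IntervalIntegrable v volume a b) (h0 : ∫ t in 0..1, v t = 0)
    (hB : ∀ x, |∫ t in 0..x, v t| ≤ B) :
    ∃ h h' : ℝ → ℝ, Periodic h 1 ∧ Periodic h' 1 ∧ (∀ x, h x = h 0 + ∫ t in 0..x, h' t) ∧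
      (∀ x, h' x = h' 0 + ∫ t in 0..x, v t) ∧ (∫ x in Ioo (0 : ℝ) 1, h x) = 0 ∧
      ∀ x, |h' x| ≤ 2 * B := by
  set G : ℝ → ℝ := fun x => ∫ t in 0..x, v t
  have hGc : Continuous G := continuous_primitive hint 0
  set h' : ℝ → ℝ := fun x => G x - ∫ t in 0..1, G t
  have hh'c : Continuous h' := hGc.sub continuous_const
  have hh'per : Periodic h' 1 := fun x => by
    simp only [h', show G (x + 1) = G x from hper.periodic_primitive hint h0 x]
  have hh'0 : ∫ t in 0..1, h' t = 0 := by
    simp [h', intervalIntegral.integral_sub (hGc.intervalIntegrable 0 1) intervalIntegrable_const]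
  set H : ℝ → ℝ := fun x => ∫ t in 0..x, h' t
  have hHc : Continuous H := continuous_primitive hh'c.intervalIntegrable 0
  have hHper : Periodic H 1 := hh'per.periodic_primitive hh'c.intervalIntegrable hh'0
  refine ⟨fun x => H x - ∫ t in 0..1, H t, h', fun x => by simp only [hHper x], hh'per,
    fun x => by simp [H]; ring, fun x => by simp [h', G]; ring, ?_, fun x => ?_⟩
  · simp [setIntegral_Ioo_zero_one,
      intervalIntegral.integral_sub (hHc.intervalIntegrable 0 1) intervalIntegrable_const]
  · have hmean : |∫ t in 0..1, G t| ≤ B := by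
      simpa using (abs_integral_le_integral_abs (μ := volume) zero_le_one).trans
        (integral_mono_on zero_le_one (hGc.intervalIntegrable 0 1).abs intervalIntegrable_const
          fun t _ => hB t)
    calc |h' x| ≤ |G x| + |∫ t in 0..1, G t| := abs_sub _ _
      _ ≤ 2 * B := by linarith [hB x]

lemma neg_sq_div_le_quadratic {κ Λ u y : ℝ} (hκ : 0 < κ) (hu : u ∈ Icc (-1 : ℝ) 1) :
    -(Λ ^ 2 / (2 * κ)) ≤ κ / 2 * y ^ 2 + Λ * u * y := by
  have hu2 : 0 ≤ 1 - u ^ 2 := by nlinarith [hu.1, hu.2]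
  have key : κ / 2 * y ^ 2 + Λ * u * y + Λ ^ 2 / (2 * κ) =
      ((κ * y + Λ * u) ^ 2 + Λ ^ 2 * (1 - u ^ 2)) / (2 * κ) := by
    field_simp; ring
  have : 0 ≤ ((κ * y + Λ * u) ^ 2 + Λ ^ 2 * (1 - u ^ 2)) / (2 * κ) := by positivity
  linarith

lemma neg_sq_div_le_energyF {W : ℝ → ℝ} {b σ κ Λ : ℝ} (hW : ∀ t ∈ Icc (-1 : ℝ) 1, 0 ≤ W t)
    (hb : 0 ≤ b) (hσ : 0 ≤ σ) (hκ : 0 < κ) {u u' h' h'' : ℝ → ℝ}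
    (hu : ∀ x, u x ∈ Icc (-1 : ℝ) 1) :
    -(Λ ^ 2 / (2 * κ)) ≤ energyF W b σ κ Λ u u' h' h'' :=
  le_integral_of_forall_le_of_nonpos (neg_nonpos.2 (by positivity)) fun x => by
    have := neg_sq_div_le_quadratic (Λ := Λ) (y := h'' x) hκ (hu x)
    have := hW _ (hu x)
    have : 0 ≤ b / 2 * u' x ^ 2 + σ / 2 * h' x ^ 2 := by positivity
    linarith

def clamp (t : ℝ) : ℝ := max (-1) (min 1 t)

lemma clamp_mem (t : ℝ) : clamp t ∈ Icc (-1 : ℝ) 1 :=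
  ⟨le_max_left _ _, max_le (by norm_num) (min_le_left _ _)⟩

lemma clamp_neg (t : ℝ) : clamp (-t) = -clamp t := by
  simp only [clamp, min_def, max_def]
  split_ifs <;> linarith

lemma clamp_of_one_le {t : ℝ} (h : 1 ≤ t) : clamp t = 1 := by
  rw [clamp, min_eq_left h]; norm_num

lemma clamp_of_le_neg_one {t : ℝ} (h : t ≤ -1) : clamp t = -1 := by
  rw [clamp, min_eq_right (by linarith), max_eq_left h]

lemma clamp_of_abs_le {t : ℝ} (h : |t| ≤ 1) : clamp t = t := by
  rw [clamp, min_eq_right (abs_le.1 h).2, max_eq_right (abs_le.1 h).1]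

lemma clamp_eq_one_or_neg_one {t : ℝ} (h : 1 ≤ |t|) : clamp t = 1 ∨ clamp t = -1 := by
  rcases le_abs'.1 h with h | h
  · exact Or.inr (clamp_of_le_neg_one h)
  · exact Or.inl (clamp_of_one_le h)

lemma continuous_clamp : Continuous clamp :=
  continuous_const.max (continuous_const.min continuous_id)

lemma HasDerivAt.clamp_comp {g : ℝ → ℝ} {g' x : ℝ} (hg : HasDerivAt g g' x) (hx : |g x| ≠ 1) :
    HasDerivAt (fun y => clamp (g y)) (if |g x| < 1 then g' else 0) x := by
  have hc := hg.continuousAt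
  rcases hx.lt_or_gt with hlt | hgt
  · rw [if_pos hlt]
    refine hg.congr_of_eventuallyEq ?_
    filter_upwards [hc.abs.eventually_lt continuousAt_const hlt] with y hy
    exact clamp_of_abs_le hy.le
  · rw [if_neg hgt.not_gt]
    rcases lt_abs.1 hgt with h | h
    · refine (hasDerivAt_const x (1 : ℝ)).congr_of_eventuallyEq ?_
      filter_upwards [continuousAt_const.eventually_lt hc h] with y hy
      exact clamp_of_one_le hy.le
    · refine (hasDerivAt_const x (-1 : ℝ)).congr_of_eventuallyEq ?_
      filter_upwards [hc.eventually_lt continuousAt_const (by linarith : g x < -1)] with y hy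
      exact clamp_of_le_neg_one hy.le

lemma countable_setOf_cos_eq (c : ℝ) : {x : ℝ | cos x = c}.Countable := by
  rcases eq_empty_or_nonempty {x : ℝ | cos x = c} with h | ⟨x₀, hx₀⟩
  · simp [h]
  refine ((countable_range fun k : ℤ => 2 * k * π + x₀).union
    (countable_range fun k : ℤ => 2 * k * π - x₀)).mono fun x hx => ?_
  obtain ⟨k, hk | hk⟩ := cos_eq_cos_iff.1 (hx₀.trans (hx : cos x = c).symm)
  exacts [Or.inl ⟨k, hk.symm⟩, Or.inr ⟨k, hk.symm⟩]

def cosProfile (K y : ℝ) : ℝ := clamp (K * cos (2 * π * y))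

def cosProfileDeriv (K y : ℝ) : ℝ :=
  if |K * cos (2 * π * y)| < 1 then -(2 * π * K * sin (2 * π * y)) else 0

section cosProfile

variable {K : ℝ}

lemma cosProfile_antiperiodic (K : ℝ) : Antiperiodic (cosProfile K) (1 / 2) := fun y => by
  rw [cosProfile, cosProfile, show 2 * π * (y + 1 / 2) = 2 * π * y + π by ring, cos_add_pi,
    mul_neg, clamp_neg]

lemma cosProfileDeriv_antiperiodic (K : ℝ) : Antiperiodic (cosProfileDeriv K) (1 / 2) := fun y => by
  simp only [cosProfileDeriv, show 2 * π * (y + 1 / 2) = 2 * π * y + π by ring, cos_add_pi,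
    sin_add_pi, mul_neg, abs_neg, neg_neg]
  split_ifs <;> simp

lemma cosProfile_periodic (K : ℝ) : Periodic (cosProfile K) 1 := by
  simpa using (cosProfile_antiperiodic K).periodic_two_mul

lemma cosProfileDeriv_periodic (K : ℝ) : Periodic (cosProfileDeriv K) 1 := by
  simpa using (cosProfileDeriv_antiperiodic K).periodic_two_mul

lemma continuous_cosProfile (K : ℝ) : Continuous (cosProfile K) :=
  continuous_clamp.comp (by fun_prop)

lemma cosProfile_mem (K y : ℝ) : cosProfile K y ∈ Icc (-1 : ℝ) 1 := clamp_mem _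

lemma measurable_cosProfileDeriv (K : ℝ) : Measurable (cosProfileDeriv K) :=
  Measurable.ite (measurableSet_lt (by fun_prop) measurable_const) (by fun_prop) measurable_const

lemma abs_cosProfileDeriv_le (hK : 0 ≤ K) (y : ℝ) : |cosProfileDeriv K y| ≤ 2 * π * K := by
  unfold cosProfileDeriv
  split_ifs
  · rw [abs_neg, abs_mul, abs_of_nonneg (by positivity : 0 ≤ 2 * π * K)]
    exact mul_le_of_le_one_right (by positivity) (abs_sin_le_one _)
  · simp only [abs_zero]; positivity

lemma intervalIntegrable_cosProfileDeriv (hK : 0 ≤ K) (a b : ℝ) :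
    IntervalIntegrable (cosProfileDeriv K) volume a b :=
  intervalIntegrable_of_abs_le (measurable_cosProfileDeriv K) (abs_cosProfileDeriv_le hK) a b

lemma hasDerivAt_cosProfile {y : ℝ} (hy : |K * cos (2 * π * y)| ≠ 1) :
    HasDerivAt (cosProfile K) (cosProfileDeriv K y) y := by
  have hg := (((hasDerivAt_id y).const_mul (2 * π)).cos).const_mul K
  simp only [id, mul_one] at hg
  exact (hg.congr_deriv (by ring) : HasDerivAt _ (-(2 * π * K * sin (2 * π * y))) y).clamp_comp hy

lemma intervalIntegral_cosProfileDeriv (hK : 0 < K) (a b : ℝ) :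
    ∫ y in a..b, cosProfileDeriv K y = cosProfile K b - cosProfile K a := by
  have hS : {y : ℝ | |K * cos (2 * π * y)| = 1}.Countable := by
    refine (((countable_setOf_cos_eq (1 / K)).union (countable_setOf_cos_eq (-(1 / K)))).preimage
      (mul_right_injective₀ (by positivity : (2 * π : ℝ) ≠ 0))).mono fun y hy => ?_
    simp only [mem_ofPred_eq, mem_preimage, mem_union] at hy ⊢
    rcases (abs_eq zero_le_one).1 hy with h | h
    · left; field_simp; linarith
    · right; field_simp; linarith
  exact integral_eq_of_hasDerivAt_off_countable _ _ hS (continuous_cosProfile K).continuousOn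
    (fun y hy => hasDerivAt_cosProfile hy.2) (intervalIntegrable_cosProfileDeriv hK.le a b)

lemma cosProfileDeriv_sq_le (hK : 0 ≤ K) (y : ℝ) : cosProfileDeriv K y ^ 2 ≤ (2 * π * K) ^ 2 := by
  rw [← sq_abs]
  exact pow_le_pow_left₀ (abs_nonneg _) (abs_cosProfileDeriv_le hK y) 2

lemma intervalIntegrable_cosProfileDeriv_sq (hK : 0 ≤ K) (a b : ℝ) :
    IntervalIntegrable (fun y => cosProfileDeriv K y ^ 2) volume a b :=
  intervalIntegrable_of_abs_le ((measurable_cosProfileDeriv K).pow_const 2)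
    (fun y => (abs_of_nonneg (sq_nonneg _)).trans_le (cosProfileDeriv_sq_le hK y)) a b

lemma cosProfile_zero (hK : 1 ≤ K) : cosProfile K 0 = 1 :=
  clamp_of_one_le (by simpa using hK)

lemma cosProfile_half (hK : 1 ≤ K) : cosProfile K (1 / 2) = -1 := by
  simpa [cosProfile_zero hK] using cosProfile_antiperiodic K 0

lemma intervalIntegral_cosProfile (K : ℝ) : ∫ y in 0..1, cosProfile K y = 0 := by
  simpa using (cosProfile_antiperiodic K).intervalIntegral_two_mul_eq_zero
    (continuous_cosProfile K).intervalIntegrable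

lemma abs_intervalIntegral_cosProfile_nat_mul_le (K : ℝ) {n : ℕ} (hn : n ≠ 0) (x : ℝ) :
    |∫ t in 0..x, cosProfile K (n * t)| ≤ 1 / n := by
  have hn' : (n : ℝ) ≠ 0 := Nat.cast_ne_zero.2 hn
  have hprim := (cosProfile_periodic K).abs_primitive_le one_pos
    (continuous_cosProfile K).intervalIntegrable (intervalIntegral_cosProfile K)
    (fun t => abs_le.2 (cosProfile_mem K t)) (n * x)
  rw [intervalIntegral.integral_comp_mul_left _ hn', mul_zero, smul_eq_mul, abs_mul, abs_inv,
    Nat.abs_cast, one_div]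
  exact mul_le_of_le_one_right (by positivity) (by simpa using hprim)

lemma cosProfileDeriv_nonpos (hK : 0 ≤ K) {y : ℝ} (hy : y ∈ Icc (0 : ℝ) (1 / 2)) :
    cosProfileDeriv K y ≤ 0 := by
  have hsin : 0 ≤ sin (2 * π * y) :=
    sin_nonneg_of_nonneg_of_le_pi (by nlinarith [pi_pos, hy.1]) (by nlinarith [pi_pos, hy.2])
  unfold cosProfileDeriv
  split_ifs
  · have : 0 ≤ 2 * π * K * sin (2 * π * y) := by positivity
    linarith
  · rfl

lemma intervalIntegral_abs_cosProfileDeriv (hK : 1 ≤ K) :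
    ∫ y in 0..1, |cosProfileDeriv K y| = 4 := by
  have hint := intervalIntegrable_cosProfileDeriv (K := K) (by linarith)
  have hper : Periodic (fun y => |cosProfileDeriv K y|) (1 / 2) := fun y => by
    simp only [cosProfileDeriv_antiperiodic K y, abs_neg]
  calc ∫ y in 0..1, |cosProfileDeriv K y|
      = 2 * ∫ y in 0..1 / 2, |cosProfileDeriv K y| := by
        simpa using hper.intervalIntegral_two_mul fun a b => (hint a b).abs
    _ = 2 * ∫ y in 0..1 / 2, -cosProfileDeriv K y := by
        congr 1
        refine integral_congr fun y hy => abs_of_nonpos (cosProfileDeriv_nonpos (by linarith) ?_)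
        rwa [uIcc_of_le (by norm_num)] at hy
    _ = 4 := by
        rw [intervalIntegral.integral_neg, intervalIntegral_cosProfileDeriv (by linarith),
          cosProfile_zero hK, cosProfile_half hK]
        norm_num

lemma pi_mul_le_abs_cosProfileDeriv (hK : 2 ≤ K) {y : ℝ} (hy : |K * cos (2 * π * y)| < 1) :
    π * K ≤ |cosProfileDeriv K y| := by
  have hcos : 4 * cos (2 * π * y) ^ 2 < 1 := by
    have hK2 : 4 ≤ K ^ 2 := by nlinarith
    have : (K * cos (2 * π * y)) ^ 2 < 1 := by
      rw [← sq_abs]; nlinarith [abs_nonneg (K * cos (2 * π * y))]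
    nlinarith [mul_nonneg (sub_nonneg.2 hK2) (sq_nonneg (cos (2 * π * y)))]
  have hsin : 1 / 2 ≤ |sin (2 * π * y)| := by
    nlinarith [sin_sq_add_cos_sq (2 * π * y), sq_abs (sin (2 * π * y)),
      abs_nonneg (sin (2 * π * y))]
  rw [cosProfileDeriv, if_pos hy, abs_neg, abs_mul, abs_of_nonneg (by positivity : 0 ≤ 2 * π * K)]
  nlinarith [mul_le_mul_of_nonneg_left hsin (by positivity : 0 ≤ 2 * π * K)]

lemma le_div_mul_abs_cosProfileDeriv (hK : 2 ≤ K) {F : ℝ → ℝ} {A : ℝ} (hF1 : F 1 = 0)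
    (hFm1 : F (-1) = 0) (hFA : ∀ t ∈ Icc (-1 : ℝ) 1, F t ≤ A) (y : ℝ) :
    F (cosProfile K y) ≤ A / (π * K) * |cosProfileDeriv K y| := by
  have hA : 0 ≤ A := hF1 ▸ hFA 1 (by norm_num)
  have hπK : 0 < π * K := by nlinarith [pi_pos]
  by_cases hy : |K * cos (2 * π * y)| < 1
  · calc F (cosProfile K y) ≤ A / (π * K) * (π * K) := by
          rw [div_mul_cancel₀ _ hπK.ne']; exact hFA _ (cosProfile_mem K y)
      _ ≤ A / (π * K) * |cosProfileDeriv K y| := by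
          gcongr; exact pi_mul_le_abs_cosProfileDeriv hK hy
  · have hF : F (cosProfile K y) = 0 := by
      rcases clamp_eq_one_or_neg_one (not_lt.1 hy) with h | h
      · rw [cosProfile, h, hF1]
      · rw [cosProfile, h, hFm1]
    rw [hF]
    positivity

lemma intervalIntegral_comp_cosProfile_le (hK : 2 ≤ K) {n : ℕ} (hn : n ≠ 0) {F : ℝ → ℝ} {A : ℝ}
    (hFc : ContinuousOn F (Icc (-1 : ℝ) 1)) (hF1 : F 1 = 0) (hFm1 : F (-1) = 0)
    (hFA : ∀ t ∈ Icc (-1 : ℝ) 1, F t ≤ A) :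
    ∫ x in 0..1, F (cosProfile K (n * x)) ≤ 4 * A / (π * K) := by
  have hFφ : Continuous fun y => F (cosProfile K y) :=
    hFc.comp_continuous (continuous_cosProfile K) (cosProfile_mem K)
  have hper : Periodic (fun y => F (cosProfile K y)) 1 := (cosProfile_periodic K).comp F
  rw [hper.intervalIntegral_comp_nat_mul hFφ.intervalIntegrable hn]
  calc ∫ y in 0..1, F (cosProfile K y)
      ≤ ∫ y in 0..1, A / (π * K) * |cosProfileDeriv K y| :=
        integral_mono_on zero_le_one (hFφ.intervalIntegrable 0 1)
          ((intervalIntegrable_cosProfileDeriv (by linarith) 0 1).abs.const_mul _)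
          fun y _ => le_div_mul_abs_cosProfileDeriv hK hF1 hFm1 hFA y
    _ = 4 * A / (π * K) := by
        rw [intervalIntegral.integral_const_mul, intervalIntegral_abs_cosProfileDeriv (by linarith)]
        ring

lemma intervalIntegral_cosProfileDeriv_sq_le (hK : 1 ≤ K) {n : ℕ} (hn : n ≠ 0) :
    ∫ x in 0..1, cosProfileDeriv K (n * x) ^ 2 ≤ 8 * π * K := by
  have hbd := abs_cosProfileDeriv_le (K := K) (by linarith)
  have hsq (y : ℝ) : cosProfileDeriv K y ^ 2 ≤ 2 * π * K * |cosProfileDeriv K y| := by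
    rw [← sq_abs, sq]
    exact mul_le_mul_of_nonneg_right (hbd y) (abs_nonneg _)
  have hper : Periodic (fun y => cosProfileDeriv K y ^ 2) 1 :=
    (cosProfileDeriv_periodic K).comp (· ^ 2)
  have hint := intervalIntegrable_cosProfileDeriv_sq (K := K) (by linarith)
  rw [hper.intervalIntegral_comp_nat_mul hint hn]
  calc ∫ y in 0..1, cosProfileDeriv K y ^ 2
      ≤ ∫ y in 0..1, 2 * π * K * |cosProfileDeriv K y| :=
        integral_mono_on zero_le_one (hint 0 1)
          ((intervalIntegrable_cosProfileDeriv (by linarith) 0 1).abs.const_mul _)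
          fun y _ => hsq y
    _ = 8 * π * K := by
        rw [intervalIntegral.integral_const_mul, intervalIntegral_abs_cosProfileDeriv hK]
        ring

end cosProfile

lemma exists_isAdmissible_cosProfile {K : ℝ} (hK : 0 < K) {n : ℕ} (hn : n ≠ 0) (c : ℝ) :
    ∃ h h' : ℝ → ℝ,
      IsAdmissible (fun x => cosProfile K (n * x)) (fun x => n * cosProfileDeriv K (n * x)) h h'
        (fun x => c * cosProfile K (n * x)) ∧ Continuous h' ∧ ∀ x, |h' x| ≤ 2 * (|c| / n) := by
  set u : ℝ → ℝ := fun x => cosProfile K (n * x)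
  have hu_cont : Continuous u := (continuous_cosProfile K).comp (continuous_const_mul _)
  have hu_int : ∀ a b, IntervalIntegrable u volume a b := hu_cont.intervalIntegrable
  have hu_per : Periodic u 1 := (cosProfile_periodic K).comp_nat_mul n
  have hu_mean : ∫ x in 0..1, u x = 0 :=
    ((cosProfile_periodic K).intervalIntegral_comp_nat_mul
      (continuous_cosProfile K).intervalIntegrable hn).trans (intervalIntegral_cosProfile K)
  have hv_bd (x : ℝ) : |∫ t in 0..x, c * u t| ≤ |c| / n := by
    rw [intervalIntegral.integral_const_mul, abs_mul, div_eq_mul_one_div]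
    exact mul_le_mul_of_nonneg_left (abs_intervalIntegral_cosProfile_nat_mul_le K hn x)
      (abs_nonneg c)
  obtain ⟨h, h', hh_per, hh'_per, hh_ftc, hh'_ftc, hh_mean, hh'_bd⟩ :=
    exists_periodic_second_primitive (v := fun x => c * u x) (fun x => congrArg (c * ·) (hu_per x))
      (fun a b => (hu_int a b).const_mul c) (by simp [hu_mean]) hv_bd
  refine ⟨h, h', ⟨hu_per, fun x => ?_, fun x => ?_, fun x => cosProfile_mem K _, ?_,
    by rw [setIntegral_Ioo_zero_one, hu_mean], hh_per, hh'_per,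
    fun x => congrArg (c * ·) (hu_per x), hh_ftc, hh'_ftc, ?_, hh_mean⟩, ?_, hh'_bd⟩
  · simp only [(cosProfileDeriv_periodic K).comp_nat_mul n x]
  · rw [intervalIntegral.integral_const_mul, ← smul_eq_mul, smul_integral_comp_mul_left,
      mul_zero, intervalIntegral_cosProfileDeriv hK]
    simp [u]
  · refine MemLp.of_bound (((measurable_cosProfileDeriv K).comp (measurable_const_mul _)).const_mul
      _).aestronglyMeasurable (n * (2 * π * K)) (ae_of_all _ fun x => ?_)
    rw [Real.norm_eq_abs, abs_mul, Nat.abs_cast]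
    exact mul_le_mul_of_nonneg_left (abs_cosProfileDeriv_le hK.le _) (Nat.cast_nonneg n)
  · refine MemLp.of_bound (continuous_const.mul hu_cont).aestronglyMeasurable |c|
      (ae_of_all _ fun x => ?_)
    rw [Real.norm_eq_abs, abs_mul]
    exact mul_le_of_le_one_right (abs_nonneg c) (abs_le.2 (cosProfile_mem K _))
  · rw [funext hh'_ftc]
    exact continuous_const.add (continuous_primitive (fun a b => (hu_int a b).const_mul c) 0)

lemma energyF_neg_div_mul_eq (W : ℝ → ℝ) (b σ Λ : ℝ) {κ : ℝ} (hκ : κ ≠ 0) (u u' h' : ℝ → ℝ) :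
    energyF W b σ κ Λ u u' h' (fun x => -(Λ / κ) * u x) =
      ∫ x in 0..1, (W (u x) + Λ ^ 2 / (2 * κ) * (1 - u x ^ 2) + b / 2 * u' x ^ 2 +
        σ / 2 * h' x ^ 2 - Λ ^ 2 / (2 * κ)) := by
  rw [energyF, setIntegral_Ioo_zero_one]
  refine integral_congr fun x _ => ?_
  field_simp
  ring

lemma energyF_cosProfile_le {W : ℝ → ℝ} {M b σ κ Λ K : ℝ} (hWc : ContinuousOn W (Icc (-1) 1))
    (hWM : ∀ t ∈ Icc (-1 : ℝ) 1, W t ≤ M) (hW1 : W 1 = 0) (hWm1 : W (-1) = 0)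
    (hb : 0 ≤ b) (hσ : 0 ≤ σ) (hκ : 0 < κ) (hK : 2 ≤ K) {n : ℕ} (hn : n ≠ 0) {h' : ℝ → ℝ}
    (hh'c : Continuous h') (hh' : ∀ x, |h' x| ≤ 2 * (|-(Λ / κ)| / n)) :
    energyF W b σ κ Λ (fun x => cosProfile K (n * x)) (fun x => n * cosProfileDeriv K (n * x)) h'
        (fun x => -(Λ / κ) * cosProfile K (n * x)) ≤
      4 * (M + Λ ^ 2 / (2 * κ)) / (π * K) + 4 * π * b * K * n ^ 2 +
        2 * σ * Λ ^ 2 / (κ ^ 2 * n ^ 2) - Λ ^ 2 / (2 * κ) := by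
  set L := Λ ^ 2 / (2 * κ)
  set F : ℝ → ℝ := fun t => W t + L * (1 - t ^ 2)
  have hFc : ContinuousOn F (Icc (-1) 1) := hWc.add (by fun_prop)
  have iF : IntervalIntegrable (fun x => F (cosProfile K (n * x))) volume 0 1 :=
    ((hFc.comp_continuous (continuous_cosProfile K) (cosProfile_mem K)).comp
      (continuous_const_mul _)).intervalIntegrable 0 1
  have iD : IntervalIntegrable (fun x => cosProfileDeriv K (n * x) ^ 2) volume 0 1 :=
    intervalIntegrable_of_abs_le
      (((measurable_cosProfileDeriv K).comp (measurable_const_mul _)).pow_const 2)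
      (fun x => (abs_of_nonneg (sq_nonneg _)).trans_le (cosProfileDeriv_sq_le (by linarith) _)) 0 1
  have iH : IntervalIntegrable (fun x => h' x ^ 2) volume 0 1 :=
    (by fun_prop : Continuous fun x => h' x ^ 2).intervalIntegrable 0 1
  have hFint : ∫ x in 0..1, F (cosProfile K (n * x)) ≤ 4 * (M + L) / (π * K) := by
    refine intervalIntegral_comp_cosProfile_le hK hn hFc (by simp [F, hW1]) (by simp [F, hWm1])
      fun t ht => ?_
    have : 0 ≤ L := by positivity
    nlinarith [hWM t ht, sq_nonneg t]
  have hDint := intervalIntegral_cosProfileDeriv_sq_le (K := K) (by linarith) hn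
  have hHint := intervalIntegral_sq_le_of_abs_le iH hh'
  have hH : σ / 2 * (2 * (|-(Λ / κ)| / n)) ^ 2 = 2 * σ * Λ ^ 2 / (κ ^ 2 * n ^ 2) := by
    rw [abs_neg, abs_div, abs_of_pos hκ, mul_pow, div_pow, div_pow, sq_abs]
    field_simp
  have iD' := (iD.const_mul ((n : ℝ) ^ 2)).const_mul (b / 2)
  have iH' := iH.const_mul (σ / 2)
  simp only [energyF_neg_div_mul_eq W b σ Λ hκ.ne', mul_pow]
  rw [intervalIntegral.integral_sub ((iF.add iD').add iH') intervalIntegrable_const,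
    intervalIntegral.integral_add (iF.add iD') iH', intervalIntegral.integral_add iF iD']
  simp only [intervalIntegral.integral_const_mul, intervalIntegral.integral_const, sub_zero,
    one_smul]
  have hD := mul_le_mul_of_nonneg_left hDint (by positivity : (0 : ℝ) ≤ n ^ 2)
  have hD' := mul_le_mul_of_nonneg_left hD (by positivity : 0 ≤ b / 2)
  have hH' := mul_le_mul_of_nonneg_left hHint (by positivity : 0 ≤ σ / 2)
  rw [hH] at hH'
  have : b / 2 * (n ^ 2 * (8 * π * K)) = 4 * π * b * K * n ^ 2 := by ring
  linarith

lemma exists_nat_sq_between {x : ℝ} (hx : 0 ≤ x) :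
    ∃ n : ℕ, n ≠ 0 ∧ x ≤ (n : ℝ) ^ 2 ∧ (n : ℝ) ^ 2 ≤ 2 * x + 2 := by
  refine ⟨⌊√x⌋₊ + 1, Nat.succ_ne_zero _, ?_, ?_⟩
  · have := Nat.lt_floor_add_one √x
    push_cast
    nlinarith [sq_sqrt hx, sqrt_nonneg x]
  · have := Nat.floor_le (sqrt_nonneg x)
    push_cast
    nlinarith [sq_sqrt hx, sqrt_nonneg x, sq_nonneg (√x - 1)]

lemma le_of_mul_maxParam_le {b σ κ Λ C : ℝ} (hb : 0 ≤ b) (hσ : 0 ≤ σ) (hκ : 0 ≤ κ) (hC : 0 ≤ C)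
    (h : C * maxParam b σ κ ≤ Λ ^ 2) :
    C * (b * σ) ≤ Λ ^ 2 ∧ C * (b * κ) ≤ Λ ^ 2 ∧ C ^ 2 * (b * σ * κ) ≤ Λ ^ 4 ∧
      C ^ 2 * (b * κ ^ 2) ≤ Λ ^ 4 := by
  have hle {t : ℝ} (ht : t ≤ maxParam b σ κ) : C * t ≤ Λ ^ 2 :=
    (mul_le_mul_of_nonneg_left ht hC).trans h
  have hsq {t : ℝ} (ht0 : 0 ≤ t) (ht : √t ≤ maxParam b σ κ) : C ^ 2 * t ≤ Λ ^ 4 := by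
    have := pow_le_pow_left₀ (by positivity) (hle ht) 2
    rwa [mul_pow, sq_sqrt ht0, ← pow_mul] at this
  refine ⟨hle ?_, hle ?_, hsq (by positivity) ?_, hsq (by positivity) ?_⟩
  · exact (le_max_left _ _).trans (le_max_left _ _)
  · exact (le_max_right _ _).trans (le_max_left _ _)
  · exact (le_max_left _ _).trans (le_max_right _ _)
  · rw [sqrt_mul hb, sqrt_sq hκ]
    exact (le_max_right _ _).trans (le_max_right _ _)

lemma pi_mul_mul_sq_le_of_mul_maxParam_le {M b σ κ Λ K N : ℝ} (hM : 0 ≤ M) (hb : 0 ≤ b)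
    (hσ : 0 ≤ σ) (hκ : 0 < κ) (hΛ : 0 < Λ) (hpar : 10 ^ 6 * (1 + M) * maxParam b σ κ ≤ Λ ^ 2)
    (hK : K = 8 * (1 + M * κ / Λ ^ 2)) (hN2 : N ^ 2 ≤ 2 * (32 * σ / κ) + 2) :
    4 * π * b * K * N ^ 2 ≤ Λ ^ 2 / κ / 16 := by
  set C : ℝ := 10 ^ 6 * (1 + M)
  obtain ⟨hbσ, hbκ, hbσκ, hbκ2⟩ := le_of_mul_maxParam_le hb hσ hκ.le (by positivity) hpar
  have hΛ2 : 0 < Λ ^ 2 := by positivity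
  have hKpos : 0 < K := by rw [hK]; positivity
  set X := b * (σ + κ)
  have hX0 : 0 ≤ X := by positivity
  have hC : 10 ^ 6 ≤ C := by simp only [C]; nlinarith
  have hC2 : 10 ^ 12 * M ≤ C ^ 2 := by simp only [C]; nlinarith
  have hX : 10 ^ 6 * X ≤ 2 * Λ ^ 2 := by
    nlinarith [mul_le_mul_of_nonneg_right hC hX0]
  have hκX : 10 ^ 12 * (M * (κ * X)) ≤ 2 * Λ ^ 4 := by
    nlinarith [mul_le_mul_of_nonneg_right hC2 (by positivity : 0 ≤ κ * X)]
  have hNκ : N ^ 2 * κ ≤ 64 * σ + 2 * κ := by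
    have := mul_le_mul_of_nonneg_right hN2 hκ.le
    rw [add_mul, mul_assoc, div_mul_cancel₀ _ hκ.ne'] at this
    linarith
  have hKX : K * X ≤ 17 * Λ ^ 2 / 10 ^ 6 := by
    have e : K * X = 8 * X + 8 * (M * (κ * X)) / Λ ^ 2 := by rw [hK]; field_simp
    have : M * (κ * X) / Λ ^ 2 ≤ 2 * Λ ^ 2 / 10 ^ 12 := by
      rw [div_le_div_iff₀ hΛ2 (by norm_num)]; nlinarith
    rw [e, mul_div_assoc]
    linarith
  have hbN : b * K * N ^ 2 * κ ≤ 64 * (K * X) := by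
    have := mul_le_mul_of_nonneg_left hNκ (by positivity : 0 ≤ b * K)
    nlinarith [mul_nonneg (mul_nonneg hb hKpos.le) hκ.le]
  rw [le_div_iff₀ (by norm_num), le_div_iff₀ hκ]
  nlinarith [pi_lt_four, (by positivity : 0 ≤ b * K * N ^ 2 * κ)]

lemma energy_bound_le_of_mul_maxParam_le {M b σ κ Λ K N : ℝ} (hM : 0 ≤ M) (hb : 0 ≤ b)
    (hσ : 0 < σ) (hκ : 0 < κ) (hΛ : 0 < Λ) (hpar : 10 ^ 6 * (1 + M) * maxParam b σ κ ≤ Λ ^ 2)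
    (hK : K = 8 * (1 + M * κ / Λ ^ 2)) (hN1 : 32 * σ / κ ≤ N ^ 2)
    (hN2 : N ^ 2 ≤ 2 * (32 * σ / κ) + 2) :
    4 * (M + Λ ^ 2 / (2 * κ)) / (π * K) + 4 * π * b * K * N ^ 2 +
        2 * σ * Λ ^ 2 / (κ ^ 2 * N ^ 2) - Λ ^ 2 / (2 * κ) ≤ -(1 / 8 * Λ ^ 2 / κ) := by
  have hΛ2 : 0 < Λ ^ 2 := by positivity
  have hKpos : 0 < K := by rw [hK]; positivity
  have hN : 0 < N ^ 2 := (by positivity : 0 < 32 * σ / κ).trans_le hN1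
  have hlayer : 4 * (M + Λ ^ 2 / (2 * κ)) / (π * K) ≤ Λ ^ 2 / κ / 6 := by
    rw [div_le_iff₀ (by positivity)]
    have hKL : Λ ^ 2 / κ * K = 8 * (Λ ^ 2 / κ + M) := by rw [hK]; field_simp
    have e : Λ ^ 2 / κ / 6 * (π * K) = π * (Λ ^ 2 / κ * K) / 6 := by ring
    have e2 : Λ ^ 2 / (2 * κ) = Λ ^ 2 / κ / 2 := by ring
    rw [e, hKL, e2]
    nlinarith [pi_gt_three, (by positivity : 0 ≤ Λ ^ 2 / κ)]
  have htension : 2 * σ * Λ ^ 2 / (κ ^ 2 * N ^ 2) ≤ Λ ^ 2 / κ / 16 := by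
    rw [div_le_div_iff₀ (by positivity) (by positivity)]
    rw [div_le_iff₀ hκ] at hN1
    have e : Λ ^ 2 / κ * (κ ^ 2 * N ^ 2) = Λ ^ 2 * (N ^ 2 * κ) := by field_simp
    rw [e]
    nlinarith [mul_le_mul_of_nonneg_left hN1 hΛ2.le]
  have hgrad := pi_mul_mul_sq_le_of_mul_maxParam_le hM hb hσ.le hκ hΛ hpar hK hN2
  have : Λ ^ 2 / (2 * κ) = Λ ^ 2 / κ / 2 := by ring
  have : 1 / 8 * Λ ^ 2 / κ = Λ ^ 2 / κ / 8 := by ring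
  have : 0 ≤ Λ ^ 2 / κ := by positivity
  linarith

theorem scaling_law_large_coupling_general (W : ℝ → ℝ)
    (hW_cont : ContinuousOn W (Icc (-1:ℝ) 1))
    (hW_nonneg : ∀ x ∈ Icc (-1:ℝ) 1, 0 ≤ W x)
    (hW_zero : ∀ x ∈ Icc (-1:ℝ) 1, (W x = 0 ↔ x = -1 ∨ x = 1)) :
    ∃ C c : ℝ, 0 < c ∧ c ≤ C ∧
      ∀ Λ κ σ b : ℝ, 0 < Λ → 0 < κ → 0 < σ → 0 < b →
        C * maxParam b σ κ ≤ Λ ^ 2 →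
        (∀ u u' h h' h'' : ℝ → ℝ, IsAdmissible u u' h h' h'' →
            -(Λ ^ 2 / (2 * κ)) ≤ energyF W b σ κ Λ u u' h' h'') ∧
        (∃ u u' h h' h'' : ℝ → ℝ, IsAdmissible u u' h h' h'' ∧
            energyF W b σ κ Λ u u' h' h'' ≤ -(c * Λ ^ 2 / κ)) := by
  obtain ⟨M, hM⟩ := isCompact_Icc.bddAbove_image hW_cont
  have hWM (t : ℝ) (ht : t ∈ Icc (-1 : ℝ) 1) : W t ≤ M := hM (mem_image_of_mem W ht)
  have hW1 : W 1 = 0 := (hW_zero 1 (by norm_num)).2 (Or.inr rfl)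
  have hWm1 : W (-1) = 0 := (hW_zero (-1) (by norm_num)).2 (Or.inl rfl)
  have hM0 : 0 ≤ M := hW1 ▸ hWM 1 (by norm_num)
  refine ⟨10 ^ 6 * (1 + M), 1 / 8, by norm_num, by nlinarith,
    fun Λ κ σ b hΛ hκ hσ hb hpar => ⟨fun u u' h h' h'' hadm =>
      neg_sq_div_le_energyF hW_nonneg hb.le hσ.le hκ hadm.u_mem, ?_⟩⟩
  obtain ⟨n, hn, hn1, hn2⟩ := exists_nat_sq_between (by positivity : 0 ≤ 32 * σ / κ)
  set K := 8 * (1 + M * κ / Λ ^ 2) with hK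
  have hK2 : 2 ≤ K := by
    have : 0 ≤ M * κ / Λ ^ 2 := by positivity
    linarith
  obtain ⟨h, h', hadm, hh'c, hh'⟩ :=
    exists_isAdmissible_cosProfile (by linarith : 0 < K) hn (-(Λ / κ))
  exact ⟨_, _, h, h', _, hadm,
    (energyF_cosProfile_le hW_cont hWM hW1 hWm1 hb.le hσ.le hκ hK2 hn hh'c hh').trans
      (energy_bound_le_of_mul_maxParam_le hM0 hb.le hσ hκ hΛ hpar hK hn1 hn2)⟩

/-- If `W` satisfies (H1) and (H2), then there are constants `C ≥ c > 0`
such that whenever `Λ² ≥ C·max{bσ, bκ, (bσκ)^{1/2}, b^{1/2}κ}` (with `Λ,κ,σ,b > 0`),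
the infimum of `F` over `A` satisfies `−Λ²/(2κ) ≤ inf_A F ≤ −c·Λ²/κ`
(the lower bound stated for every admissible pair, the upper bound via an
admissible competitor). -/
theorem scaling_law_large_coupling (W : ℝ → ℝ)
    (hW_cont : ContinuousOn W (Icc (-1:ℝ) 1))
    (hW_nonneg : ∀ x ∈ Icc (-1:ℝ) 1, 0 ≤ W x)
    (hW_zero : ∀ x ∈ Icc (-1:ℝ) 1, (W x = 0 ↔ x = -1 ∨ x = 1))
    (hW2 : ∃ cW > 0, ∀ x ∈ Icc (-1:ℝ) 1, cW * min (|x - 1| ^ 2) (|x + 1| ^ 2) ≤ W x) :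
    ∃ C c : ℝ, 0 < c ∧ c ≤ C ∧
      ∀ Λ κ σ b : ℝ, 0 < Λ → 0 < κ → 0 < σ → 0 < b →
        C * maxParam b σ κ ≤ Λ ^ 2 →
        (∀ u u' h h' h'' : ℝ → ℝ, IsAdmissible u u' h h' h'' →
            -(Λ ^ 2 / (2 * κ)) ≤ energyF W b σ κ Λ u u' h' h'') ∧
        (∃ u u' h h' h'' : ℝ → ℝ, IsAdmissible u u' h h' h'' ∧
            energyF W b σ κ Λ u u' h' h'' ≤ -(c * Λ ^ 2 / κ)) :=
  scaling_law_large_coupling_general W hW_cont hW_nonneg hW_zero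
end
end

section
/- Let W : [-1,1] → [0,∞) satisfy (H1). Then for all parameters Λ, κ, σ, b > 0 there exists an admissible pair (u,h) ∈ A such that F(u,h) ≤ (8 + max_{[−1,1]} W) · min{1, b^{1/2}}. -/
open MeasureTheory Set Filter

noncomputable section

/-!
If `√b ≥ 1`, the pair `u = h = 0` costs `W 0 ≤ max W`. Otherwise take `h = 0` and let `u` be the
`1`-periodic profile that climbs linearly from `-1` to `1` on `[0, ε]`, rests in the well `1` on
`[ε, 1/2]`, and then repeats with the opposite sign: `u (x + 1/2) = -u x`, which also forces mean
zero. Folding `[0, 1]` onto `[0, 1/2]` shows that only the two transition layers cost energy, each at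
most `ε (max W + b/2 (2/ε)²)`, and `ε = √b / 2` turns the total into `(8 + max W) √b`.
-/

open Function

section Folding

variable {E : Type*} [NormedAddCommGroup E] [NormedSpace ℝ E] {f : ℝ → E}

theorem intervalIntegral_two_mul_eq_integral_add_shift
    (hf : ∀ a b, IntervalIntegrable f volume a b) (a c : ℝ) :
    ∫ x in a..a + 2 * c, f x = ∫ x in a..a + c, (f x + f (x + c)) := by
  have hshift : ∫ x in a..a + c, f (x + c) = ∫ x in a + c..a + 2 * c, f x := by
    rw [intervalIntegral.integral_comp_add_right]; ring_nf
  rw [intervalIntegral.integral_add (hf _ _)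
      ((IntervalIntegrable.comp_add_right_iff (c := c)).mpr (hf _ _)), hshift,
    intervalIntegral.integral_add_adjacent_intervals (hf _ _) (hf _ _)]

theorem Function.Antiperiodic.intervalIntegral_add {c : ℝ} (hf : Antiperiodic f c)
    (hi : ∀ a b, IntervalIntegrable f volume a b) (x : ℝ) :
    ∫ t in 0..x + c, f t = (∫ t in 0..c, f t) - ∫ t in 0..x, f t := by
  have hshift : ∫ t in 0..x, f (t + c) = ∫ t in c..x + c, f t := by
    rw [intervalIntegral.integral_comp_add_right, zero_add]
  rw [← intervalIntegral.integral_add_adjacent_intervals (hi 0 c) (hi c (x + c)), ← hshift,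
    sub_eq_add_neg, ← intervalIntegral.integral_neg]
  exact congrArg _ (intervalIntegral.integral_congr fun t _ => hf t)

theorem setIntegral_Ioo_zero_one_eq_integral_two_halves
    (hf : ∀ a b, IntervalIntegrable f volume a b) :
    ∫ x in Ioo (0:ℝ) 1, f x = ∫ x in (0:ℝ)..1 / 2, (f x + f (x + 1 / 2)) := by
  rw [← integral_Ioc_eq_integral_Ioo, ← intervalIntegral.integral_of_le zero_le_one]
  convert intervalIntegral_two_mul_eq_integral_add_shift hf 0 (1 / 2) using 2 <;> norm_num

end Folding

theorem isAdmissible_flat {u u' : ℝ → ℝ} (hu : Periodic u 1) (hu' : Periodic u' 1)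
    (hftc : ∀ x, u x = u 0 + ∫ t in (0:ℝ)..x, u' t) (hmem : ∀ x, u x ∈ Icc (-1:ℝ) 1)
    (hl2 : MemLp u' 2 (volume.restrict (Ioo (0:ℝ) 1))) (hmean : ∫ x in Ioo (0:ℝ) 1, u x = 0) :
    IsAdmissible u u' 0 0 0 where
  u_per := hu
  u'_per := hu'
  u_ftc := hftc
  u_mem := hmem
  u'_l2 := hl2
  u_mean := hmean
  h_per _ := rfl
  h'_per _ := rfl
  h''_per _ := rfl
  h_ftc _ := by simp
  h'_ftc _ := by simp
  h''_l2 := MemLp.zero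
  h_mean := by simp

theorem energyF_flat (W : ℝ → ℝ) (b σ κ Λ : ℝ) (u u' : ℝ → ℝ) :
    energyF W b σ κ Λ u u' 0 0 = ∫ x in Ioo (0:ℝ) 1, (W (u x) + b / 2 * u' x ^ 2) := by
  simp [energyF]

theorem energyF_zero (W : ℝ → ℝ) (b σ κ Λ : ℝ) : energyF W b σ κ Λ 0 0 0 0 = W 0 := by
  simp [energyF_flat]

def layerIndicator (ε x : ℝ) : ℝ := if Int.fract x < ε then 1 else 0

/-- On `[0, 1)` and for `ε ≤ 1/2`: `2/ε` on `[0, ε)`, `-2/ε` on `[1/2, 1/2 + ε)`, `0` elsewhere. -/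
def profileSlope (ε x : ℝ) : ℝ := 2 / ε * (layerIndicator ε x - layerIndicator ε (x - 1 / 2))

def profile (ε x : ℝ) : ℝ := -1 + ∫ t in (0:ℝ)..x, profileSlope ε t

section Profile

variable {ε : ℝ}

theorem layerIndicator_periodic : Periodic (layerIndicator ε) 1 := fun x => by
  simp [layerIndicator]

theorem profileSlope_antiperiodic : Antiperiodic (profileSlope ε) (1 / 2) := fun x => by
  have h : layerIndicator ε (x + 1 / 2) = layerIndicator ε (x - 1 / 2) := by
    rw [← layerIndicator_periodic (x - 1 / 2)]; ring_nf
  simp only [profileSlope, h, add_sub_cancel_right]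
  ring

theorem profileSlope_periodic : Periodic (profileSlope ε) 1 := by
  simpa using (profileSlope_antiperiodic (ε := ε)).periodic_two_mul

theorem measurable_profileSlope : Measurable (profileSlope ε) := by
  have hχ : Measurable (layerIndicator ε) :=
    Measurable.ite (measurableSet_lt measurable_fract measurable_const) measurable_const
      measurable_const
  exact (hχ.sub (hχ.comp (measurable_id.sub_const _))).const_mul _

theorem abs_profileSlope_le (hε : 0 < ε) (x : ℝ) : |profileSlope ε x| ≤ 2 / ε := by
  have h01 : ∀ y, layerIndicator ε y ∈ Icc (0:ℝ) 1 := fun y => by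
    unfold layerIndicator; split_ifs <;> norm_num
  have hdiff : |layerIndicator ε x - layerIndicator ε (x - 1 / 2)| ≤ 1 := by
    obtain ⟨h1, h2⟩ := h01 x
    obtain ⟨h3, h4⟩ := h01 (x - 1 / 2)
    rw [abs_le]; constructor <;> linarith
  rw [profileSlope, abs_mul, abs_of_pos (by positivity : 0 < 2 / ε)]
  exact mul_le_of_le_one_right (by positivity) hdiff

theorem intervalIntegrable_profileSlope (hε : 0 < ε) (a b : ℝ) :
    IntervalIntegrable (profileSlope ε) volume a b :=
  (intervalIntegrable_const (c := 2 / ε)).mono_fun' measurable_profileSlope.aestronglyMeasurable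
    (ae_of_all _ (abs_profileSlope_le hε))

theorem profileSlope_of_mem_Ico (hε2 : ε ≤ 1 / 2) {t : ℝ} (ht : t ∈ Ico 0 (1 / 2)) :
    profileSlope ε t = if t < ε then 2 / ε else 0 := by
  have hfract : Int.fract t = t := Int.fract_eq_self.mpr ⟨ht.1, by linarith [ht.2]⟩
  have hfract' : Int.fract (t - 1 / 2) = t + 1 / 2 := by
    rw [← Int.fract_add_one, show t - 1 / 2 + 1 = t + 1 / 2 by ring, Int.fract_eq_self]
    constructor <;> linarith [ht.1, ht.2]
  have hout : ¬ t + 1 / 2 < ε := by linarith [ht.1]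
  simp only [profileSlope, layerIndicator, hfract, hfract', if_neg hout]
  split_ifs <;> ring

theorem profile_of_mem_Icc (hε : 0 < ε) (hε2 : ε ≤ 1 / 2) {x : ℝ} (hx : x ∈ Icc 0 (1 / 2)) :
    profile ε x = -1 + 2 / ε * min x ε := by
  set m := min x ε
  have hm0 : 0 ≤ m := le_min hx.1 hε.le
  have hmx : m ≤ x := min_le_left x ε
  have hramp : ∫ t in (0:ℝ)..m, profileSlope ε t = ∫ _ in (0:ℝ)..m, 2 / ε :=
    intervalIntegral.integral_congr_Ioo_of_le hm0 fun t ht => by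
      rw [profileSlope_of_mem_Ico hε2 ⟨ht.1.le, by linarith [ht.2, hx.2]⟩,
        if_pos (ht.2.trans_le (min_le_right x ε))]
  have hflat : ∫ t in m..x, profileSlope ε t = ∫ _ in m..x, (0:ℝ) :=
    intervalIntegral.integral_congr_Ioo_of_le hmx fun t ht => by
      rw [profileSlope_of_mem_Ico hε2 ⟨by linarith [ht.1], by linarith [ht.2, hx.2]⟩,
        if_neg fun htε => lt_asymm ht.1 (lt_min ht.2 htε)]
  rw [profile, ← intervalIntegral.integral_add_adjacent_intervals
    (intervalIntegrable_profileSlope hε 0 m) (intervalIntegrable_profileSlope hε m x),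
    hramp, hflat]
  simp only [intervalIntegral.integral_const, smul_eq_mul]
  ring

theorem profile_eq_one_of_mem_Icc (hε : 0 < ε) (hε2 : ε ≤ 1 / 2) {x : ℝ}
    (hx : x ∈ Icc ε (1 / 2)) : profile ε x = 1 := by
  rw [profile_of_mem_Icc hε hε2 ⟨hε.le.trans hx.1, hx.2⟩, min_eq_right hx.1]
  field_simp; ring

theorem profile_antiperiodic (hε : 0 < ε) (hε2 : ε ≤ 1 / 2) :
    Antiperiodic (profile ε) (1 / 2) := fun x => by
  have h := profile_eq_one_of_mem_Icc hε hε2 ⟨hε2, le_rfl⟩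
  rw [profile] at h ⊢
  rw [profile, profileSlope_antiperiodic.intervalIntegral_add (intervalIntegrable_profileSlope hε)]
  linarith

theorem profile_periodic (hε : 0 < ε) (hε2 : ε ≤ 1 / 2) : Periodic (profile ε) 1 := by
  simpa using (profile_antiperiodic hε hε2).periodic_two_mul

theorem continuous_profile (hε : 0 < ε) : Continuous (profile ε) :=
  continuous_const.add (intervalIntegral.continuous_primitive (intervalIntegrable_profileSlope hε) 0)

theorem profile_mem_Icc (hε : 0 < ε) (hε2 : ε ≤ 1 / 2) (x : ℝ) : profile ε x ∈ Icc (-1) 1 := by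
  have habs : Periodic (fun y => |profile ε y|) (1 / 2) := fun y => by
    simp only [profile_antiperiodic hε hε2 y, abs_neg]
  obtain ⟨y, hy, hxy⟩ := habs.exists_mem_Ico₀ (by norm_num) x
  have hmin : 2 / ε * min y ε ≤ 2 := by
    calc 2 / ε * min y ε ≤ 2 / ε * ε := by gcongr; exact min_le_right y ε
      _ = 2 := by field_simp
  have hmin0 : 0 ≤ 2 / ε * min y ε := mul_nonneg (by positivity) (le_min hy.1 hε.le)
  refine abs_le.mp ?_
  rw [hxy, profile_of_mem_Icc hε hε2 ⟨hy.1, hy.2.le⟩, abs_le]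
  constructor <;> linarith

theorem setIntegral_profile (hε : 0 < ε) (hε2 : ε ≤ 1 / 2) :
    ∫ x in Ioo (0:ℝ) 1, profile ε x = 0 := by
  rw [setIntegral_Ioo_zero_one_eq_integral_two_halves (continuous_profile hε).intervalIntegrable]
  simp only [(profile_antiperiodic hε hε2 _ : profile ε (_ + 1 / 2) = _), add_neg_cancel,
    intervalIntegral.integral_zero]

theorem isAdmissible_profile (hε : 0 < ε) (hε2 : ε ≤ 1 / 2) :
    IsAdmissible (profile ε) (profileSlope ε) 0 0 0 :=
  isAdmissible_flat (profile_periodic hε hε2) profileSlope_periodic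
    (fun x => by simp [profile]) (profile_mem_Icc hε hε2)
    (MemLp.of_bound measurable_profileSlope.aestronglyMeasurable (2 / ε)
      (ae_of_all _ (abs_profileSlope_le hε)))
    (setIntegral_profile hε hε2)

theorem setIntegral_profile_energy_le {W : ℝ → ℝ} (hW : ContinuousOn W (Icc (-1) 1)) {M : ℝ}
    (hWM : ∀ y ∈ Icc (-1:ℝ) 1, W y ≤ M) (hW1 : W 1 = 0) (hWm1 : W (-1) = 0) {b : ℝ} (hb : 0 ≤ b)
    (hε : 0 < ε) (hε2 : ε ≤ 1 / 2) :
    ∫ x in Ioo (0:ℝ) 1, (W (profile ε x) + b / 2 * profileSlope ε x ^ 2) ≤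
      2 * ε * (M + b / 2 * (2 / ε) ^ 2) := by
  set E := fun x => W (profile ε x) + b / 2 * profileSlope ε x ^ 2
  set K := M + b / 2 * (2 / ε) ^ 2
  have hslope_sq : ∀ x, b / 2 * profileSlope ε x ^ 2 ≤ b / 2 * (2 / ε) ^ 2 := fun x => by
    have hx := abs_le.mp (abs_profileSlope_le hε x)
    exact mul_le_mul_of_nonneg_left (sq_le_sq' hx.1 hx.2) (by positivity)
  have hE_le : ∀ x, E x ≤ K := fun x => add_le_add (hWM _ (profile_mem_Icc hε hε2 x)) (hslope_sq x)
  have hE_int : ∀ a c, IntervalIntegrable E volume a c := fun a c =>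
    ((hW.comp_continuous (continuous_profile hε) (profile_mem_Icc hε hε2)).intervalIntegrable
      a c).add <| (intervalIntegrable_const (c := b / 2 * (2 / ε) ^ 2)).mono_fun'
        ((measurable_profileSlope.pow_const 2).const_mul _).aestronglyMeasurable
        (ae_of_all _ fun x => by
          dsimp only
          rw [Real.norm_eq_abs, abs_of_nonneg (by positivity)]
          exact hslope_sq x)
  have hfold_int : ∀ a c, IntervalIntegrable (fun x => E x + E (x + 1 / 2)) volume a c :=
    fun a c => (hE_int a c).add ((IntervalIntegrable.comp_add_right_iff).mpr (hE_int _ _))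
  have hE_wells : EqOn (fun x => E x + E (x + 1 / 2)) 0 (Ioo ε (1 / 2)) := fun x hx => by
    have hslope : profileSlope ε x = 0 := by
      rw [profileSlope_of_mem_Ico hε2 ⟨by linarith [hx.1], hx.2⟩, if_neg (not_lt.mpr hx.1.le)]
    simp only [E, profile_antiperiodic hε hε2 x, profileSlope_antiperiodic x, hslope,
      profile_eq_one_of_mem_Icc hε hε2 ⟨hx.1.le, hx.2.le⟩, hW1, hWm1, Pi.zero_apply]
    norm_num
  have hlayer : ∫ x in (0:ℝ)..ε, (E x + E (x + 1 / 2)) ≤ ∫ _ in (0:ℝ)..ε, 2 * K :=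
    intervalIntegral.integral_mono_on hε.le (hfold_int 0 ε) intervalIntegrable_const
      fun x _ => by linarith [hE_le x, hE_le (x + 1 / 2)]
  rw [setIntegral_Ioo_zero_one_eq_integral_two_halves hE_int,
    ← intervalIntegral.integral_add_adjacent_intervals (hfold_int 0 ε) (hfold_int ε (1 / 2)),
    intervalIntegral.integral_congr_Ioo_of_le hε2 hE_wells]
  simp only [intervalIntegral.integral_const, smul_eq_mul, Pi.zero_apply, sub_zero] at hlayer ⊢
  linarith

end Profile

theorem upper_bound_flat_general (W : ℝ → ℝ)
    (hW_cont : ContinuousOn W (Icc (-1:ℝ) 1))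
    (hW_zero : ∀ x ∈ Icc (-1:ℝ) 1, (W x = 0 ↔ x = -1 ∨ x = 1))
    (Λ κ σ b : ℝ) (hb : 0 < b) :
    ∃ u u' h h' h'' : ℝ → ℝ, IsAdmissible u u' h h' h'' ∧
      energyF W b σ κ Λ u u' h' h'' ≤
        (8 + sSup (W '' Icc (-1:ℝ) 1)) * min 1 (Real.sqrt b) := by
  set M := sSup (W '' Icc (-1:ℝ) 1)
  have hWM : ∀ y ∈ Icc (-1:ℝ) 1, W y ≤ M := fun y hy =>
    le_csSup (isCompact_Icc.image_of_continuousOn hW_cont).bddAbove (mem_image_of_mem W hy)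
  have hW1 : W 1 = 0 := (hW_zero 1 (by norm_num)).mpr (Or.inr rfl)
  have hWm1 : W (-1) = 0 := (hW_zero (-1) (by norm_num)).mpr (Or.inl rfl)
  rcases le_total 1 (Real.sqrt b) with hb1 | hb1
  · refine ⟨0, 0, 0, 0, 0, isAdmissible_flat (fun _ => rfl) (fun _ => rfl) (by simp) (by simp)
      MemLp.zero (by simp), ?_⟩
    rw [energyF_zero, min_eq_left hb1]
    linarith [hWM 0 (by norm_num)]
  · set ε := Real.sqrt b / 2
    have hε : 0 < ε := by positivity
    have hε2 : ε ≤ 1 / 2 := by simp only [ε]; linarith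
    have hgrad : b / 2 * (2 / ε) ^ 2 = 8 := by
      have hεsq : ε ^ 2 = b / 4 := by
        simp only [ε]; rw [div_pow, Real.sq_sqrt hb.le]; norm_num
      field_simp
      rw [hεsq]
      ring
    refine ⟨profile ε, profileSlope ε, 0, 0, 0, isAdmissible_profile hε hε2, ?_⟩
    calc energyF W b σ κ Λ (profile ε) (profileSlope ε) 0 0
        = ∫ x in Ioo (0:ℝ) 1, (W (profile ε x) + b / 2 * profileSlope ε x ^ 2) :=
          energyF_flat W b σ κ Λ _ _
      _ ≤ 2 * ε * (M + b / 2 * (2 / ε) ^ 2) :=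
          setIntegral_profile_energy_le hW_cont hWM hW1 hWm1 hb.le hε hε2
      _ = (8 + M) * min 1 (Real.sqrt b) := by rw [hgrad, min_eq_right hb1]; ring

/-- if `W` satisfies (H1), then for all `Λ,κ,σ,b > 0` there is an
admissible pair `(u,h) ∈ A` with `F(u,h) ≤ (8 + max_{[−1,1]} W)·min{1, b^{1/2}}`. -/
theorem upper_bound_flat (W : ℝ → ℝ)
    (hW_cont : ContinuousOn W (Icc (-1:ℝ) 1))
    (hW_nonneg : ∀ x ∈ Icc (-1:ℝ) 1, 0 ≤ W x)
    (hW_zero : ∀ x ∈ Icc (-1:ℝ) 1, (W x = 0 ↔ x = -1 ∨ x = 1))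
    (Λ κ σ b : ℝ) (hΛ : 0 < Λ) (hκ : 0 < κ) (hσ : 0 < σ) (hb : 0 < b) :
    ∃ u u' h h' h'' : ℝ → ℝ, IsAdmissible u u' h h' h'' ∧
      energyF W b σ κ Λ u u' h' h'' ≤
        (8 + sSup (W '' Icc (-1:ℝ) 1)) * min 1 (Real.sqrt b) :=
  upper_bound_flat_general W hW_cont hW_zero Λ κ σ b hb
end
end
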